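/- Let (L, R) be a weak factorization system on a category K in which every object is cofibrant, and let (Cyl, γ, σ) be a functorial cylinder for (L,R). Then every map f: X → Y in R = L^□ is a dual strong deformation retract: there exist g: Y → X and h: Cyl X → X such that f ∘ g = id_Y, h ∘ γ⁰_X = id_X, h ∘ γ¹_X = g ∘ f, and f ∘ h = f ∘ σ_X. -/

import Mathlib

/-!
Both pieces of data are lifts against `f`: the section `g` lifts `0 ⟶ Y` (every object is
cofibrant), and `h` lifts `γ_X`, a homotopy between `𝟙 X` and `f ≫ g` over `Y`, which exists
because these two maps agree after composing with `f`.
-/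

universe w v u u₁ u₂ u₃

open CategoryTheory Limits Opposite

namespace Paper

variable {K : Type u} [Category.{v} K]

/-- The class of maps with the right lifting property against all maps in `H`. -/
def Rlp (H : MorphismProperty K) : MorphismProperty K :=
  fun _ _ g => ∀ ⦃A B : K⦄ (h : A ⟶ B), H h → HasLiftingProperty h g

/-- The class of maps with the left lifting property against all maps in `H`. -/
def Llp (H : MorphismProperty K) : MorphismProperty K :=
  fun _ _ f => ∀ ⦃A B : K⦄ (h : A ⟶ B), H h → HasLiftingProperty f h

/-- Weak factorization system. -/
structure IsWFS (L R : MorphismProperty K) : Prop where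
  llp_eq : L = Llp R
  rlp_eq : R = Rlp L
  factor : ∀ ⦃X Y : K⦄ (f : X ⟶ Y),
    ∃ (Z : K) (l : X ⟶ Z) (r : Z ⟶ Y), L l ∧ R r ∧ l ≫ r = f

/-- A class of maps is essentially a (small) set. -/
def IsSmallClass (I : MorphismProperty K) : Prop :=
  Small.{v} (Σ (X : K) (Y : K), { f : X ⟶ Y // I f })

/-- Every object is cofibrant. -/
def AllCofibrant [HasInitial K] (L : MorphismProperty K) : Prop :=
  ∀ X : K, L (initial.to X)

/-- `L` is cofibrantly generated (by a set). -/
def CofGenerated (L : MorphismProperty K) : Prop :=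
  ∃ I : MorphismProperty K, IsSmallClass I ∧ L = Llp (Rlp I)

/-- intersection of two classes of maps -/
def interClass (A B : MorphismProperty K) : MorphismProperty K := fun _ _ f => A f ∧ B f

/-- closed under retracts in the arrow category -/
def RetractClosed (W : MorphismProperty K) : Prop :=
  ∀ ⦃f g : Arrow K⦄ (i : f ⟶ g) (r : g ⟶ f), i ≫ r = 𝟙 f → W g.hom → W f.hom

/-- the 2-out-of-3 property -/
def TwoOutOfThree (W : MorphismProperty K) : Prop :=
  (∀ ⦃X Y Z : K⦄ (f : X ⟶ Y) (g : Y ⟶ Z), W f → W g → W (f ≫ g)) ∧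
  (∀ ⦃X Y Z : K⦄ (f : X ⟶ Y) (g : Y ⟶ Z), W f → W (f ≫ g) → W g) ∧
  (∀ ⦃X Y Z : K⦄ (f : X ⟶ Y) (g : Y ⟶ Z), W g → W (f ≫ g) → W f)

/-- Quillen model structure, given by cofibrations, weak equivalences and fibrations. -/
structure IsModelStructure (Cof W Fib : MorphismProperty K) : Prop where
  retractClosed : RetractClosed W
  twoOutOfThree : TwoOutOfThree W
  wfs₁ : IsWFS Cof (interClass W Fib)
  wfs₂ : IsWFS (interClass Cof W) Fib

/-- the functor `X ↦ X + X` -/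
@[simps] noncomputable def double (K : Type u) [Category.{v} K] [HasBinaryCoproducts K] :
    K ⥤ K where
  obj X := X ⨿ X
  map f := coprod.map f f

/-- A functorial cylinder: a functor `C` together with natural transformations
`γ : X + X ⟶ C X` and `σ : C X ⟶ X` factoring the codiagonal. -/
structure Cylinder (K : Type u) [Category.{v} K] [HasBinaryCoproducts K] where
  C : K ⥤ K
  γ : double K ⟶ C
  σ : C ⟶ 𝟭 K
  fac : ∀ X : K, γ.app X ≫ σ.app X = coprod.desc (𝟙 X) (𝟙 X)

namespace Cylinder
variable [HasBinaryCoproducts K] (cyl : Cylinder K)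

/-- `γ⁰` -/
noncomputable def γ₀ : 𝟭 K ⟶ cyl.C where
  app X := coprod.inl ≫ cyl.γ.app X
  naturality X Y f := by
    have h := cyl.γ.naturality f
    dsimp [double] at h ⊢
    rw [Category.assoc, ← h, ← Category.assoc, ← Category.assoc, coprod.inl_map]

/-- `γ¹` -/
noncomputable def γ₁ : 𝟭 K ⟶ cyl.C where
  app X := coprod.inr ≫ cyl.γ.app X
  naturality X Y f := by
    have h := cyl.γ.naturality f
    dsimp [double] at h ⊢
    rw [Category.assoc, ← h, ← Category.assoc, ← Category.assoc, coprod.inr_map]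

/-- `(Cyl, γ, σ)` is a cylinder for a weak factorization system whose left class is `L`
if each `γ_X` lies in `L`. -/
def IsCylinderFor (L : MorphismProperty K) : Prop := ∀ X : K, L (cyl.γ.app X)

/-- the cylinder is final if each `σ_X` lies in `R`. -/
def IsFinal (R : MorphismProperty K) : Prop := ∀ X : K, R (cyl.σ.app X)

end Cylinder

section Star
variable [HasPushouts K] {F F' : K ⥤ K}

/-- `f ⋆ α`: the induced map from the pushout of `F f` along `α_X` to `F' Y`. -/
noncomputable def starMap (α : F ⟶ F') {X Y : K} (f : X ⟶ Y) :
    pushout (F.map f) (α.app X) ⟶ F'.obj Y :=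
  pushout.desc (α.app Y) (F'.map f) (α.naturality f)

/-- the class `L` is stable under `(−) ⋆ α`. -/
def StableUnderStar (L : MorphismProperty K) (α : F ⟶ F') : Prop :=
  ∀ ⦃X Y : K⦄ (f : X ⟶ Y), L f → L (starMap α f)

/-- the class `I ⋆ α = { f ⋆ α | f ∈ I }`. -/
def starClass (α : F ⟶ F') (I : MorphismProperty K) : MorphismProperty K :=
  fun _ _ g => ∃ (X Y : K) (f : X ⟶ Y), I f ∧ Arrow.mk g = Arrow.mk (starMap α f)

end Star

/-- the cylinder is cartesian with respect to the left class `L`: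
the cylinder functor is a left adjoint and `L` is stable under `⋆γ`, `⋆γ⁰` and `⋆γ¹`. -/
structure Cylinder.IsCartesian [HasBinaryCoproducts K] [HasPushouts K]
    (cyl : Cylinder K) (L : MorphismProperty K) : Prop where
  leftAdjoint : cyl.C.IsLeftAdjoint
  star_γ : StableUnderStar L cyl.γ
  star_γ₀ : StableUnderStar L cyl.γ₀
  star_γ₁ : StableUnderStar L cyl.γ₁

section Lambda
variable [HasBinaryCoproducts K] [HasPushouts K]

/-- `Λⁿ(Cyl,S,I)` -/
noncomputable def LambdaN (cyl : Cylinder K) (S I : MorphismProperty K) :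
    ℕ → MorphismProperty K
  | 0 => fun _ _ f => S f ∨ starClass cyl.γ₀ I f ∨ starClass cyl.γ₁ I f
  | n + 1 => starClass cyl.γ (LambdaN cyl S I n)

/-- `Λ(Cyl,S,I)` -/
noncomputable def Lambda (cyl : Cylinder K) (S I : MorphismProperty K) :
    MorphismProperty K :=
  fun _ _ f => ∃ n : ℕ, LambdaN cyl S I n f

/-- `T` is fibrant if `T → 1` has the right lifting property against `Λ(Cyl,S,I)`. -/
noncomputable def Fibrant [HasTerminal K] (cyl : Cylinder K) (S I : MorphismProperty K)
    (T : K) : Prop :=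
  Rlp (Lambda cyl S I) (terminal.from T)

end Lambda

/-- `f` and `g` are homotopic: `(f|g)` factors through `γ_X`. -/
def Htp [HasBinaryCoproducts K] (cyl : Cylinder K) {X Y : K} (f g : X ⟶ Y) : Prop :=
  ∃ h : cyl.C.obj X ⟶ Y, cyl.γ.app X ≫ h = coprod.desc f g

/-- symmetric-transitive closure of a relation -/
inductive STClos {α : Sort*} (r : α → α → Prop) : α → α → Prop
  | base : ∀ {x y : α}, r x y → STClos r x y
  | symm : ∀ {x y : α}, STClos r x y → STClos r y x
  | trans : ∀ {x y z : α}, STClos r x y → STClos r y z → STClos r x z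

/-- the homotopy equivalence relation `∼`, the symmetric-transitive closure of `≃`. -/
def HtpEq [HasBinaryCoproducts K] (cyl : Cylinder K) {X Y : K} : (X ⟶ Y) → (X ⟶ Y) → Prop :=
  STClos (Htp cyl)

/-- `W(Cyl,S,I)`: the maps `f : X ⟶ Y` such that for every fibrant `T` the induced map
`Hom(Y,T)/∼ → Hom(X,T)/∼` is bijective (expressed elementwise). -/
noncomputable def Weq [HasBinaryCoproducts K] [HasPushouts K] [HasTerminal K]
    (cyl : Cylinder K) (S I : MorphismProperty K) : MorphismProperty K :=
  fun X Y f => ∀ T : K, Fibrant cyl S I T →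
    (∀ t : X ⟶ T, ∃ u : Y ⟶ T, HtpEq cyl (f ≫ u) t) ∧
    (∀ u v : Y ⟶ T, HtpEq cyl (f ≫ u) (f ≫ v) → HtpEq cyl u v)

/-- pushout stability of a class of maps -/
def StableUnderPushout (L : MorphismProperty K) : Prop :=
  ∀ ⦃A B A' B' : K⦄ ⦃f : A ⟶ B⦄ ⦃g : A ⟶ A'⦄ ⦃f' : A' ⟶ B'⦄ ⦃g' : B ⟶ B'⦄,
    IsPushout g f f' g' → L f → L f'

/-- closure under transfinite composition of smooth (colimit preserving) chains -/
def ClosedUnderTransfiniteComposition (L : MorphismProperty K) : Prop :=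
  ∀ (o : Ordinal.{v}) (ho : (0 : Ordinal.{v}) < o)
    (D : (Set.Iio o : Set Ordinal.{v}) ⥤ K),
    Nonempty (PreservesColimits D) →
    (∀ (β : Ordinal.{v}) (hβ : β + 1 < o),
      L (D.map (homOfLE (Subtype.mk_le_mk.mpr (le_self_add : β ≤ β + 1)) :
        (⟨β, lt_of_le_of_lt (le_self_add : β ≤ β + 1) hβ⟩ : (Set.Iio o : Set Ordinal.{v})) ⟶
        ⟨β + 1, hβ⟩))) →
    ∀ (c : Cocone D), IsColimit c → L (c.ι.app ⟨0, ho⟩)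

/-- A localizer for the class `Cof`: a class `W` with the 2-out-of-3 property, containing
`Cof^□`, and whose intersection with `Cof` is closed under pushouts and transfinite
compositions. -/
structure IsLocalizer (Cof W : MorphismProperty K) : Prop where
  twoOutOfThree : TwoOutOfThree W
  rlp_le : ∀ ⦃X Y : K⦄ (f : X ⟶ Y), Rlp Cof f → W f
  pushout : StableUnderPushout (interClass Cof W)
  transfinite : ClosedUnderTransfiniteComposition (interClass Cof W)

/-- `W(S)`: the smallest localizer for `Cof` containing `S` (the intersection of all of them). -/
def smallestLocalizer (Cof S : MorphismProperty K) : MorphismProperty K :=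
  fun _ _ f => ∀ W : MorphismProperty K, IsLocalizer Cof W →
    (∀ ⦃A B : K⦄ (s : A ⟶ B), S s → W s) → W f

/-- the smallest class containing `S` which is a localizer for `Cof` and moreover closed
under retracts in the arrow category. -/
def smallestRetractLocalizer (Cof S : MorphismProperty K) : MorphismProperty K :=
  fun _ _ f => ∀ W : MorphismProperty K, IsLocalizer Cof W → RetractClosed W →
    (∀ ⦃A B : K⦄ (s : A ⟶ B), S s → W s) → W f

/-- the empty class of maps -/
def emptyClass (K : Type u) [Category.{v} K] : MorphismProperty K := fun _ _ _ => False

/-- a preorder is `κ`-directed if every subset of cardinality `< κ` has an upper bound -/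
def IsCardinalDirected (κ : Cardinal.{v}) (J : Type v) [Preorder J] : Prop :=
  ∀ S : Set J, Cardinal.mk S < κ → ∃ j : J, ∀ s ∈ S, s ≤ j

/-- an object `X` is `κ`-presentable if `Hom(X,-)` preserves `κ`-directed colimits -/
def IsPresentableObj (κ : Cardinal.{v}) (X : K) : Prop :=
  ∀ (J : Type v) [Preorder J], IsCardinalDirected κ J →
    Nonempty (PreservesColimitsOfShape J (coyoneda.obj (op X)))

/-- `X` is a `κ`-directed colimit of objects from the set `A` -/
def IsDirectedColimitFrom (κ : Cardinal.{v}) (A : Set K) (X : K) : Prop :=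
  ∃ (J : Type v) (pre : Preorder J),
    letI := pre
    IsCardinalDirected κ J ∧
      ∃ (D : J ⥤ K) (c : Cocone D), Nonempty (IsColimit c) ∧ c.pt = X ∧ ∀ j : J, D.obj j ∈ A

/-- `κ`-accessible category -/
structure IsCardinalAccessible (κ : Cardinal.{v}) (K : Type u) [Category.{v} K] : Prop where
  isRegular : κ.IsRegular
  hasDirectedColimits :
    ∀ (J : Type v) [Preorder J], IsCardinalDirected κ J → HasColimitsOfShape J K
  generators : ∃ A : Set K, Small.{v} A ∧ (∀ X ∈ A, IsPresentableObj κ X) ∧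
    ∀ X : K, IsDirectedColimitFrom κ A X

/-- accessible category -/
def IsAccessibleCat (K : Type u) [Category.{v} K] : Prop :=
  ∃ κ : Cardinal.{v}, IsCardinalAccessible κ K

/-- locally presentable category: accessible and cocomplete -/
def IsLocallyPresentable (K : Type u) [Category.{v} K] : Prop :=
  IsAccessibleCat K ∧ HasColimits K

/-- `F` preserves `κ`-directed colimits -/
def PreservesCardinalDirectedColimits (κ : Cardinal.{v}) {A : Type u₁} [Category.{v} A]
    {C : Type u₂} [Category.{v} C] (F : A ⥤ C) : Prop :=
  ∀ (J : Type v) [Preorder J], IsCardinalDirected κ J →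
    Nonempty (PreservesColimitsOfShape J F)

/-- accessible functor -/
def IsAccessibleFunctor {A : Type u₁} [Category.{v} A] {C : Type u₂} [Category.{v} C]
    (F : A ⥤ C) : Prop :=
  ∃ κ : Cardinal.{v}, IsCardinalAccessible κ A ∧ IsCardinalAccessible κ C ∧
    PreservesCardinalDirectedColimits κ F

/-- dual strong deformation retract -/
def DualStrongDeformationRetract [HasBinaryCoproducts K] (cyl : Cylinder K)
    {X Y : K} (f : X ⟶ Y) : Prop :=
  ∃ (g : Y ⟶ X) (h : cyl.C.obj X ⟶ X),
    g ≫ f = 𝟙 Y ∧ cyl.γ₀.app X ≫ h = 𝟙 X ∧ cyl.γ₁.app X ≫ h = f ≫ g ∧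
      h ≫ f = cyl.σ.app X ≫ f

theorem IsWFS.hasLiftingProperty {L R : MorphismProperty K} (hwfs : IsWFS L R)
    {A B X Y : K} {i : A ⟶ B} {p : X ⟶ Y} (hi : L i) (hp : R p) : HasLiftingProperty i p := by
  rw [hwfs.rlp_eq] at hp
  exact hp i hi

theorem exists_section_of_hasLiftingProperty [HasInitial K] {X Y : K} (f : X ⟶ Y)
    [HasLiftingProperty (initial.to Y) f] : ∃ g : Y ⟶ X, g ≫ f = 𝟙 Y :=
  let sq : CommSq (initial.to X) (initial.to Y) f (𝟙 Y) := ⟨initial.hom_ext _ _⟩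
  ⟨sq.lift, sq.fac_right⟩

namespace Cylinder

variable [HasBinaryCoproducts K] (cyl : Cylinder K)

theorem γ₀_app_σ_app (X : K) : cyl.γ₀.app X ≫ cyl.σ.app X = 𝟙 X :=
  (Category.assoc _ _ _).trans ((coprod.inl ≫= cyl.fac X).trans (coprod.inl_desc _ _))

theorem γ₁_app_σ_app (X : K) : cyl.γ₁.app X ≫ cyl.σ.app X = 𝟙 X :=
  (Category.assoc _ _ _).trans ((coprod.inr ≫= cyl.fac X).trans (coprod.inr_desc _ _))

theorem exists_homotopy_over {X Z Y : K} (f : Z ⟶ Y) [HasLiftingProperty (cyl.γ.app X) f]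
    (u v : X ⟶ Z) (huv : u ≫ f = v ≫ f) :
    ∃ h : cyl.C.obj X ⟶ Z,
      cyl.γ₀.app X ≫ h = u ∧ cyl.γ₁.app X ≫ h = v ∧ h ≫ f = cyl.σ.app X ≫ u ≫ f := by
  have sq : CommSq (coprod.desc u v) (cyl.γ.app X) f (cyl.σ.app X ≫ u ≫ f) := ⟨by
    apply coprod.hom_ext
    · exact (coprod.inl_desc_assoc _ _ _).trans <| (Category.id_comp _).symm.trans <|
        (cyl.γ₀_app_σ_app X =≫ (u ≫ f)).symm.trans <|
          (Category.assoc _ _ _).trans (Category.assoc _ _ _)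
    · exact (coprod.inr_desc_assoc _ _ _).trans <| huv.symm.trans <|
        (Category.id_comp _).symm.trans <| (cyl.γ₁_app_σ_app X =≫ (u ≫ f)).symm.trans <|
          (Category.assoc _ _ _).trans (Category.assoc _ _ _)⟩
  obtain ⟨⟨⟨h, hγ, hσ⟩⟩⟩ := ‹HasLiftingProperty (cyl.γ.app X) f›.sq_hasLift sq
  exact ⟨h, (Category.assoc _ _ _).trans ((coprod.inl ≫= hγ).trans (coprod.inl_desc _ _)),
    (Category.assoc _ _ _).trans ((coprod.inr ≫= hγ).trans (coprod.inr_desc _ _)), hσ⟩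

end Cylinder

theorem dualStrongDeformationRetract_of_hasLiftingProperty [HasInitial K]
    [HasBinaryCoproducts K] (cyl : Cylinder K) {X Y : K} (f : X ⟶ Y)
    [HasLiftingProperty (initial.to Y) f] [HasLiftingProperty (cyl.γ.app X) f] :
    DualStrongDeformationRetract cyl f := by
  obtain ⟨g, hg⟩ := exists_section_of_hasLiftingProperty f
  obtain ⟨h, h₀, h₁, hf⟩ := cyl.exists_homotopy_over f (𝟙 X) (f ≫ g) (by simp [hg])
  exact ⟨g, h, hg, h₀, h₁, by simpa using hf⟩

/-- Lemma 3.?: for a weak factorization system `(L,R)` in which every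
object is cofibrant and a functorial cylinder, every map in `R = L^□` is a dual strong
deformation retract. -/
theorem statement13 {K : Type u} [Category.{v} K]
    [HasInitial K] [HasBinaryCoproducts K]
    (L R : MorphismProperty K) (hwfs : IsWFS L R)
    (hcof : AllCofibrant L)
    (cyl : Cylinder K) (hcyl : cyl.IsCylinderFor L)
    {X Y : K} (f : X ⟶ Y) (hf : R f) :
    ∃ (g : Y ⟶ X) (h : cyl.C.obj X ⟶ X),
      g ≫ f = 𝟙 Y ∧ cyl.γ₀.app X ≫ h = 𝟙 X ∧ cyl.γ₁.app X ≫ h = f ≫ g ∧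
        h ≫ f = cyl.σ.app X ≫ f := by
  have := hwfs.hasLiftingProperty (hcof Y) hf
  have := hwfs.hasLiftingProperty (hcyl X) hf
  exact dualStrongDeformationRetract_of_hasLiftingProperty cyl f

end Paper
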